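/- Fix n ≥ 1, smooth per-batch losses E_0, …, E_{n−1} : ℝ^D → ℝ, θ₀ ∈ ℝ^D, and a continuously differentiable vector field f₁ : ℝ^D → ℝ^D; let Ē = (1/n) Σ_{μ=0}^{n−1} E_μ and let θ_n(h) be the result of n SGD steps with learning rate h starting at θ₀ using batches E_0, …, E_{n−1} in order. Suppose there exist C > 0 and h₀ > 0 such that for every h ∈ (0, h₀) there is a solution φ_h : [0, n h] → ℝ^D of φ′(t) = −∇Ē(φ(t)) + n h f₁(φ(t)) with φ_h(0) = θ₀ satisfying ‖φ_h(n h) − θ_n(h)‖ ≤ C h³. Then necessarily f₁(θ₀) = −½ ∇²Ē(θ₀)[∇Ē(θ₀)] + (1/n²) Σ_{0 ≤ τ < μ ≤ n−1} ∇²E_μ(θ₀)[∇E_τ(θ₀)]. -/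

import Mathlib

/-- SGD iterates: `θ₀` and `θ_{μ+1} = θ_μ - h ∇E_μ(θ_μ)`. -/
noncomputable def sgdIter {D : ℕ} (E : ℕ → EuclideanSpace ℝ (Fin D) → ℝ)
    (h : ℝ) (θ₀ : EuclideanSpace ℝ (Fin D)) : ℕ → EuclideanSpace ℝ (Fin D)
  | 0 => θ₀
  | (μ + 1) => sgdIter E h θ₀ μ - h • gradient (E μ) (sgdIter E h θ₀ μ)

/-- The average loss `Ē = (1/n) ∑ E_μ`. -/
noncomputable def avgLoss {D : ℕ} (n : ℕ) (E : ℕ → EuclideanSpace ℝ (Fin D) → ℝ)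
    (θ : EuclideanSpace ℝ (Fin D)) : ℝ :=
  (1 / (n : ℝ)) * ∑ μ ∈ Finset.range n, E μ θ


open Asymptotics Filter Set Topology

section AuxLemmas



variable {X : Type*} {Y : Type*} [NormedAddCommGroup X] [NormedSpace ℝ X]
  [NormedAddCommGroup Y] [NormedSpace ℝ Y]

/-- Composition of a first-order expansion with a differentiable map. -/
lemma comp_expand {g : X → Y} {L : X →L[ℝ] Y} {x₀ : X} (hg : HasFDerivAt g L x₀)
    {c : ℝ → X} {v : X}
    (hc : (fun h => c h - x₀ - h • v) =o[𝓝 0] (fun h : ℝ => h)) :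
    (fun h => g (c h) - g x₀ - h • L v) =o[𝓝 0] (fun h : ℝ => h) := by
  have hsv : (fun h : ℝ => h • v) =O[𝓝 0] (fun h : ℝ => h) := by
    refine IsBigO.of_bound ‖v‖ ?_
    filter_upwards with h
    simp [norm_smul, mul_comm]
  have hO : (fun h : ℝ => c h - x₀) =O[𝓝 0] (fun h : ℝ => h) := by
    have := hc.isBigO.add hsv
    simpa using this
  have hct : Tendsto c (𝓝 0) (𝓝 x₀) := by
    have h0 : Tendsto (fun h : ℝ => c h - x₀) (𝓝 0) (𝓝 0) :=
      hO.trans_tendsto (by exact tendsto_id)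
    have := h0.add_const x₀
    simpa using this
  have h1 : (fun h : ℝ => g (c h) - g x₀ - L (c h - x₀)) =o[𝓝 0] (fun h : ℝ => h) :=
    (hg.isLittleO.comp_tendsto hct).trans_isBigO hO
  have h2 : (fun h : ℝ => L (c h - x₀) - h • L v) =o[𝓝 0] (fun h : ℝ => h) := by
    have : (fun h : ℝ => L (c h - x₀ - h • v)) =o[𝓝 0] (fun h : ℝ => h) :=
      (L.isBigO_comp _ _).trans_isLittleO hc
    refine this.congr_left fun h => ?_
    rw [map_sub, map_smul]
  have := h1.add h2
  refine this.congr_left fun h => ?_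
  abel

/-- Multiplying a `o(h)` function by `h` gives `o(h²)`. -/
lemma smul_littleo {F : ℝ → X} (hF : F =o[𝓝 0] fun h : ℝ => h) :
    (fun h => h • F h) =o[𝓝 0] fun h : ℝ => h ^ 2 := by
  rw [isLittleO_iff] at hF ⊢
  intro c hc
  filter_upwards [hF hc] with h hh
  rw [norm_smul]
  calc ‖h‖ * ‖F h‖ ≤ ‖h‖ * (c * ‖h‖) := by
        exact mul_le_mul_of_nonneg_left hh (norm_nonneg _)
    _ = c * ‖h ^ 2‖ := by rw [norm_pow]; ring

/-- `o(h²)` implies `o(h)` near zero. -/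
lemma littleo_sq_to_lin {F : ℝ → X} (hF : F =o[𝓝 0] fun h : ℝ => h ^ 2) :
    F =o[𝓝 0] fun h : ℝ => h := by
  refine hF.trans_isBigO ?_
  have : (fun h : ℝ => h ^ 2) =o[𝓝 0] fun h : ℝ => h := by
    simpa using isLittleO_pow_pow (𝕜 := ℝ) (one_lt_two)
  exact this.isBigO

/-- `h ↦ h² • w` is `O(h²)`. -/
lemma sq_smul_bigo (w : X) :
    (fun h : ℝ => h ^ 2 • w) =O[𝓝 0] fun h : ℝ => h ^ 2 := by
  refine IsBigO.of_bound ‖w‖ ?_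
  filter_upwards with h
  simp [norm_smul, mul_comm]

/-- `h ↦ h² • w` is `o(h)`. -/
lemma sq_smul_littleo (w : X) :
    (fun h : ℝ => h ^ 2 • w) =o[𝓝 0] fun h : ℝ => h := by
  have := (sq_smul_bigo w).trans_isLittleO
    (by simpa using isLittleO_pow_pow (𝕜 := ℝ) (one_lt_two) :
      (fun h : ℝ => h ^ 2) =o[𝓝 0] fun h : ℝ => h)
  exact this


lemma stay_in_ball {X : Type*} [NormedAddCommGroup X] [NormedSpace ℝ X]
    {φ V : ℝ → X} {x₀ : X} {T δ K : ℝ}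
    (hφ0 : φ 0 = x₀)
    (hd : ∀ t ∈ Icc (0:ℝ) T, HasDerivAt φ (V t) t)
    (hK : 0 ≤ K) (hδ : K * T < δ)
    (hbound : ∀ t ∈ Icc (0:ℝ) T, ‖φ t - x₀‖ ≤ δ → ‖V t‖ ≤ K) :
    ∀ t ∈ Icc (0:ℝ) T, ‖φ t - x₀‖ ≤ K * t := by
  set s : Set ℝ := {t | ‖φ t - x₀‖ ≤ K * t} with hs_def
  have hcont : ContinuousOn φ (Icc 0 T) :=
    fun t ht => (hd t ht).continuousAt.continuousWithinAt
  have hclosed : IsClosed (s ∩ Icc 0 T) := by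
    have heq : s ∩ Icc 0 T = Icc 0 T ∩ (fun t => ‖φ t - x₀‖ - K * t) ⁻¹' Iic 0 := by
      ext t
      simp only [hs_def, mem_inter_iff, mem_setOf_eq, mem_preimage, mem_Iic, sub_nonpos]
      tauto
    rw [heq]
    exact ContinuousOn.preimage_isClosed_of_isClosed
      (((hcont.sub continuousOn_const).norm).sub (continuousOn_const.mul continuousOn_id))
      isClosed_Icc isClosed_Iic
  have ha : (0:ℝ) ∈ s := by simp [hs_def, hφ0]
  have hgt : ∀ x ∈ s ∩ Ico 0 T, ∀ y ∈ Ioi x, (s ∩ Ioc x y).Nonempty := by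
    rintro x ⟨hxs, hx0, hxT⟩ y hy
    have hxs' : ‖φ x - x₀‖ ≤ K * x := hxs
    have hKx : K * x ≤ K * T := mul_le_mul_of_nonneg_left hxT.le hK
    have hc := (hd x ⟨hx0, hxT.le⟩).continuousAt
    rw [Metric.continuousAt_iff] at hc
    obtain ⟨η, hη, hrad⟩ := hc (δ - K * T) (by linarith)
    set e := min (x + η/2) (min y T) with he_def
    have hex : x < e := lt_min (by linarith) (lt_min hy hxT)
    have heT : e ≤ T := le_trans (min_le_right _ _) (min_le_right _ _)
    have hey : e ≤ y := le_trans (min_le_right _ _) (min_le_left _ _)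
    have hball : ∀ z ∈ Icc x e, ‖φ z - x₀‖ ≤ δ := by
      intro z hz
      have hze : z ≤ x + η/2 := le_trans hz.2 (min_le_left _ _)
      have hdist : dist z x < η := by
        rw [Real.dist_eq, abs_of_nonneg (by linarith [hz.1])]
        linarith
      have h2 := hrad hdist
      rw [dist_eq_norm] at h2
      calc ‖φ z - x₀‖ ≤ ‖φ z - φ x‖ + ‖φ x - x₀‖ := by
            have := norm_sub_le_norm_sub_add_norm_sub (φ z) (φ x) x₀
            linarith [this]
        _ ≤ (δ - K * T) + K * x := add_le_add h2.le (le_trans hxs (le_refl _))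
        _ ≤ δ := by linarith
    have hmvt := norm_image_sub_le_of_norm_deriv_le_segment'
      (f := φ) (f' := V) (a := x) (b := e) (C := K)
      (fun z hz => (hd z ⟨le_trans hx0 hz.1, le_trans hz.2 heT⟩).hasDerivWithinAt)
      (fun z hz => hbound z ⟨le_trans hx0 hz.1, le_trans hz.2.le heT⟩ (hball z ⟨hz.1, hz.2.le⟩))
    refine ⟨e, ?_, hex, hey⟩
    have h3 := hmvt e (right_mem_Icc.mpr hex.le)
    have : ‖φ e - x₀‖ ≤ ‖φ e - φ x‖ + ‖φ x - x₀‖ :=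
      norm_sub_le_norm_sub_add_norm_sub (φ e) (φ x) x₀
    simp only [hs_def, mem_setOf_eq]
    calc ‖φ e - x₀‖ ≤ K * (e - x) + K * x := by linarith [hxs']
      _ = K * e := by ring
  intro t ht
  exact IsClosed.Icc_subset_of_forall_exists_gt hclosed ha hgt ht

lemma contDiff_gradient {D : ℕ} {f : EuclideanSpace ℝ (Fin D) → ℝ} (hf : ContDiff ℝ (⊤ : ℕ∞) f) :
    ContDiff ℝ (⊤ : ℕ∞) (gradient f) := by
  have h1 : ContDiff ℝ (⊤ : ℕ∞) (fderiv ℝ f) := hf.fderiv_right (by simp)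
  have h2 : ContDiff ℝ (⊤ : ℕ∞) ((InnerProductSpace.toDual ℝ (EuclideanSpace ℝ (Fin D))).symm :
      (EuclideanSpace ℝ (Fin D) →L[ℝ] ℝ) → EuclideanSpace ℝ (Fin D)) :=
    (InnerProductSpace.toDual ℝ (EuclideanSpace ℝ (Fin D))).symm.toContinuousLinearEquiv.contDiff
  exact h2.comp h1

lemma avgLoss_contDiff {D n : ℕ} {E : ℕ → EuclideanSpace ℝ (Fin D) → ℝ}
    (hE : ∀ μ < n, ContDiff ℝ (⊤ : ℕ∞) (E μ)) : ContDiff ℝ (⊤ : ℕ∞) (avgLoss n E) := by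
  unfold avgLoss
  exact contDiff_const.mul (ContDiff.sum fun μ hμ => hE μ (Finset.mem_range.mp hμ))

lemma n_smul_gradient_avgLoss {D n : ℕ} {E : ℕ → EuclideanSpace ℝ (Fin D) → ℝ}
    (hE : ∀ μ < n, ContDiff ℝ (⊤ : ℕ∞) (E μ)) (hn : 1 ≤ n) (θ₀ : EuclideanSpace ℝ (Fin D)) :
    (n : ℝ) • gradient (avgLoss n E) θ₀ = ∑ μ ∈ Finset.range n, gradient (E μ) θ₀ := by
  have hdiff : ∀ μ ∈ Finset.range n, DifferentiableAt ℝ (E μ) θ₀ :=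
    fun μ hμ => ((hE μ (Finset.mem_range.mp hμ)).differentiable (by simp)).differentiableAt
  have h1 : fderiv ℝ (avgLoss n E) θ₀
      = (1 / (n:ℝ)) • ∑ μ ∈ Finset.range n, fderiv ℝ (E μ) θ₀ := by
    unfold avgLoss
    rw [fderiv_const_mul (DifferentiableAt.fun_sum hdiff), fderiv_fun_sum hdiff]
  have hne : (n : ℝ) ≠ 0 := by positivity
  unfold gradient
  rw [h1, map_smul, map_sum, smul_smul]
  rw [mul_one_div, div_self hne, one_smul]

lemma sgd_expand {D : ℕ} (E : ℕ → EuclideanSpace ℝ (Fin D) → ℝ)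
    (θ₀ : EuclideanSpace ℝ (Fin D)) (m : ℕ)
    (hd : ∀ μ < m, DifferentiableAt ℝ (gradient (E μ)) θ₀) :
    (fun h : ℝ => sgdIter E h θ₀ m - θ₀ + h • (∑ μ ∈ Finset.range m, gradient (E μ) θ₀)
        - h ^ 2 • ∑ μ ∈ Finset.range m, ∑ τ ∈ Finset.range μ,
            fderiv ℝ (gradient (E μ)) θ₀ (gradient (E τ) θ₀)) =o[𝓝 0]
      (fun h : ℝ => h ^ 2) := by
  induction m with
  | zero =>
    have : (fun h : ℝ => sgdIter E h θ₀ 0 - θ₀ + h • (∑ μ ∈ Finset.range 0, gradient (E μ) θ₀)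
        - h ^ 2 • ∑ μ ∈ Finset.range 0, ∑ τ ∈ Finset.range μ,
            fderiv ℝ (gradient (E μ)) θ₀ (gradient (E τ) θ₀)) = fun _ => 0 := by
      funext h; simp [sgdIter]
    rw [this]
    exact isLittleO_zero _ _
  | succ m ih =>
    have IH := ih (fun μ hμ => hd μ (Nat.lt_succ_of_lt hμ))
    set c : ℝ → EuclideanSpace ℝ (Fin D) := fun h => sgdIter E h θ₀ m with hc_def
    set S1 := ∑ μ ∈ Finset.range m, gradient (E μ) θ₀ with hS1
    set S2 := ∑ μ ∈ Finset.range m, ∑ τ ∈ Finset.range μ,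
        fderiv ℝ (gradient (E μ)) θ₀ (gradient (E τ) θ₀) with hS2
    have hc : (fun h : ℝ => c h - θ₀ - h • (-S1)) =o[𝓝 0] (fun h : ℝ => h) := by
      have := (littleo_sq_to_lin IH).add (sq_smul_littleo S2)
      refine this.congr_left fun h => ?_
      simp only [smul_neg]
      abel
    have hcomp := comp_expand (hd m (Nat.lt_succ_self m)).hasFDerivAt hc
    have hsm := smul_littleo hcomp
    have := IH.sub hsm
    refine this.congr_left fun h => ?_
    have hmap : (fderiv ℝ (gradient (E m)) θ₀) (-S1)
        = -∑ τ ∈ Finset.range m, fderiv ℝ (gradient (E m)) θ₀ (gradient (E τ) θ₀) := by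
      rw [hS1, map_neg, map_sum]
    simp only [Finset.sum_range_succ, sgdIter, ← hc_def, ← hS1, ← hS2, hmap,
      smul_add, smul_sub, smul_neg, smul_smul, ← pow_two]
    abel

set_option maxHeartbeats 1000000 in
lemma flow_taylor {X : Type*} [NormedAddCommGroup X] [NormedSpace ℝ X]
    {g f₁ : X → X} {θ₀ : X} {Hb : X →L[ℝ] X}
    (hg : HasFDerivAt g Hb θ₀) (hfc : ContinuousAt f₁ θ₀)
    (n : ℕ) (hn : 1 ≤ n) :
    ∀ ε > (0:ℝ), ∃ h₁ > (0:ℝ), ∀ h ∈ Ioo (0:ℝ) h₁,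
      ∀ φ : ℝ → X, φ 0 = θ₀ →
      (∀ t ∈ Icc (0:ℝ) ((n:ℝ)*h),
        HasDerivAt φ (-(g (φ t)) + ((n:ℝ)*h) • f₁ (φ t)) t) →
      ‖φ ((n:ℝ)*h) - (θ₀ + ((n:ℝ)*h) • (-(g θ₀)) + (((n:ℝ)*h)^2/2) • Hb (g θ₀)
          + ((n:ℝ)*h)^2 • f₁ θ₀)‖ ≤ ε * h^2 := by
  intro ε hε
  set A := g θ₀ with hA
  set L := ‖Hb‖ with hL
  set Fc := ‖f₁ θ₀‖ + 1 with hFc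
  set K := ‖A‖ + L + 1 + Fc with hK
  have hL0 : 0 ≤ L := norm_nonneg _
  have hFc1 : 1 ≤ Fc := by have := norm_nonneg (f₁ θ₀); simp only [hFc]; linarith
  have hK1 : 1 ≤ K := by have := norm_nonneg A; simp only [hK]; linarith
  have hK0 : 0 ≤ K := by linarith
  have hnpos : (0:ℝ) < n := by exact_mod_cast Nat.pos_of_ne_zero (by omega)
  set ε₂ := min (ε / (2 * (n:ℝ)^2 * (K+1))) 1 with hε₂def
  have hε₂pos : 0 < ε₂ := by
    apply lt_min _ one_pos
    have : (0:ℝ) < 2 * (n:ℝ)^2 * (K+1) := by positivity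
    positivity
  have hε₂le1 : ε₂ ≤ 1 := min_le_right _ _
  have hε₂le : ε₂ ≤ ε / (2 * (n:ℝ)^2 * (K+1)) := min_le_left _ _
  have h1 : ∀ᶠ x in 𝓝 θ₀, ‖g x - A - Hb (x - θ₀)‖ ≤ ε₂ * ‖x - θ₀‖ := by
    have := isLittleO_iff.mp hg.isLittleO hε₂pos
    filter_upwards [this] with x hx
    simpa [hA] using hx
  have h2 : ∀ᶠ x in 𝓝 θ₀, ‖f₁ x - f₁ θ₀‖ ≤ ε₂ := by
    have := Metric.tendsto_nhds.mp hfc ε₂ hε₂pos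
    filter_upwards [this] with x hx
    rw [dist_eq_norm] at hx
    exact hx.le
  obtain ⟨δ', hδ'pos, hδprop⟩ := Metric.eventually_nhds_iff.mp (h1.and h2)
  set δ := min (δ'/2) 1 with hδdef
  have hδpos : 0 < δ := lt_min (by linarith) one_pos
  have hδle1 : δ ≤ 1 := min_le_right _ _
  have hprop : ∀ x : X, ‖x - θ₀‖ ≤ δ →
      ‖g x - A - Hb (x - θ₀)‖ ≤ ε₂ * ‖x - θ₀‖ ∧ ‖f₁ x - f₁ θ₀‖ ≤ ε₂ := by
    intro x hx
    refine hδprop ?_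
    rw [dist_eq_norm]
    calc ‖x - θ₀‖ ≤ δ := hx
      _ ≤ δ'/2 := min_le_left _ _
      _ < δ' := by linarith
  set c4 := (L+1)*K + Fc with hc4
  have hc40 : 0 < c4 := by nlinarith
  set h₁ := min (δ / ((n:ℝ) * (K+1))) (ε / (2 * L * c4 * (n:ℝ)^3 + 1)) with hh₁def
  have hh₁pos : 0 < h₁ := by
    apply lt_min
    · positivity
    · have : (0:ℝ) < 2 * L * c4 * (n:ℝ)^3 + 1 := by positivity
      positivity
  refine ⟨h₁, hh₁pos, ?_⟩
  rintro h ⟨hh0, hhlt⟩ φ hφ0 hφd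
  set T := (n:ℝ) * h with hTdef
  have hTpos : 0 < T := by positivity
  have hTbound : T ≤ δ / (K+1) := by
    have h1' : h ≤ δ / ((n:ℝ) * (K+1)) := le_trans hhlt.le (min_le_left _ _)
    rw [div_mul_eq_div_div] at h1'
    calc T = (n:ℝ) * h := hTdef
      _ ≤ (n:ℝ) * (δ / (n:ℝ) / (K+1)) := mul_le_mul_of_nonneg_left h1' hnpos.le
      _ = δ / (K+1) := by field_simp
  have hTle1 : T ≤ 1 := by
    have : δ / (K+1) ≤ 1 := by
      rw [div_le_one (by linarith)]
      linarith
    linarith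
  have hKT : K * T < δ := by
    have h2' : K * T ≤ K * (δ / (K+1)) := mul_le_mul_of_nonneg_left hTbound hK0
    have h3' : K * (δ / (K+1)) < δ := by
      rw [mul_div_assoc']
      rw [div_lt_iff₀ (by linarith : (0:ℝ) < K + 1)]
      nlinarith
    exact lt_of_le_of_lt h2' h3'
  set V : ℝ → X := fun t => -(g (φ t)) + T • f₁ (φ t) with hV
  have hgbound : ∀ x : X, ‖x - θ₀‖ ≤ δ → ‖g x - A‖ ≤ (L + ε₂) * ‖x - θ₀‖ := by
    intro x hx
    have h3' := (hprop x hx).1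
    calc ‖g x - A‖ = ‖(g x - A - Hb (x - θ₀)) + Hb (x - θ₀)‖ := by
          congr 1; abel
      _ ≤ ‖g x - A - Hb (x - θ₀)‖ + ‖Hb (x - θ₀)‖ := norm_add_le _ _
      _ ≤ ε₂ * ‖x - θ₀‖ + L * ‖x - θ₀‖ := add_le_add h3' (Hb.le_opNorm _)
      _ = (L + ε₂) * ‖x - θ₀‖ := by ring
  have hfbound : ∀ x : X, ‖x - θ₀‖ ≤ δ → ‖f₁ x‖ ≤ Fc := by
    intro x hx
    have h3' := (hprop x hx).2
    calc ‖f₁ x‖ = ‖(f₁ x - f₁ θ₀) + f₁ θ₀‖ := by congr 1; abel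
      _ ≤ ‖f₁ x - f₁ θ₀‖ + ‖f₁ θ₀‖ := norm_add_le _ _
      _ ≤ ε₂ + ‖f₁ θ₀‖ := add_le_add h3' le_rfl
      _ ≤ Fc := by simp only [hFc]; linarith
  have hVbound : ∀ t ∈ Icc (0:ℝ) T, ‖φ t - θ₀‖ ≤ δ → ‖V t‖ ≤ K := by
    intro t ht hin
    have hg' := hgbound _ hin
    have hgx : ‖g (φ t)‖ ≤ ‖A‖ + (L + 1) := by
      calc ‖g (φ t)‖ = ‖(g (φ t) - A) + A‖ := by congr 1; abel
        _ ≤ ‖g (φ t) - A‖ + ‖A‖ := norm_add_le _ _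
        _ ≤ (L + ε₂) * ‖φ t - θ₀‖ + ‖A‖ := add_le_add hg' le_rfl
        _ ≤ ‖A‖ + (L + 1) := by
            have hx1 : (L + ε₂) * ‖φ t - θ₀‖ ≤ (L + ε₂) * δ :=
              mul_le_mul_of_nonneg_left hin (by linarith)
            have hx2 : (L + ε₂) * δ ≤ (L + 1) * 1 :=
              mul_le_mul (by linarith) hδle1 hδpos.le (by linarith)
            linarith
    have hfx := hfbound _ hin
    have hVle : ‖V t‖ ≤ ‖g (φ t)‖ + T * ‖f₁ (φ t)‖ := by
      simp only [hV]
      refine (norm_add_le _ _).trans ?_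
      simp [norm_neg, norm_smul, Real.norm_eq_abs, abs_of_pos hTpos]
    calc ‖V t‖ ≤ ‖g (φ t)‖ + T * ‖f₁ (φ t)‖ := hVle
      _ ≤ (‖A‖ + (L + 1)) + 1 * Fc := by
          refine add_le_add hgx ?_
          exact mul_le_mul hTle1 hfx (norm_nonneg _) zero_le_one
      _ = K := by rw [hK]; ring
  have hstay := stay_in_ball hφ0 hφd hK0 hKT hVbound
  have hin : ∀ t ∈ Icc (0:ℝ) T, ‖φ t - θ₀‖ ≤ δ := by
    intro t ht
    calc ‖φ t - θ₀‖ ≤ K * t := hstay t ht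
      _ ≤ K * T := mul_le_mul_of_nonneg_left ht.2 hK0
      _ ≤ δ := hKT.le
  -- first order: χ
  set χ : ℝ → X := fun t => φ t - θ₀ + t • A with hχ
  have hχd : ∀ t ∈ Icc (0:ℝ) T, HasDerivAt χ (V t + A) t := by
    intro t ht
    have h1' := ((hφd t ht).sub_const θ₀).add ((hasDerivAt_id t).smul_const A)
    exact h1'.congr_deriv (by simp [hV])
  have hχbound : ∀ t ∈ Ico (0:ℝ) T, ‖V t + A‖ ≤ c4 * T := by
    intro t ht
    have ht' : t ∈ Icc (0:ℝ) T := ⟨ht.1, ht.2.le⟩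
    have hφt := hin t ht'
    have hsplit : V t + A = -(g (φ t) - A) + T • f₁ (φ t) := by
      simp only [hV]; abel
    have hKt : ‖φ t - θ₀‖ ≤ K * T := by
      calc ‖φ t - θ₀‖ ≤ K * t := hstay t ht'
        _ ≤ K * T := mul_le_mul_of_nonneg_left ht.2.le hK0
    have hVAle : ‖V t + A‖ ≤ ‖g (φ t) - A‖ + ‖T • f₁ (φ t)‖ := by
      rw [hsplit]
      refine (norm_add_le _ _).trans ?_
      simp [norm_sub_rev, norm_neg]
    calc ‖V t + A‖ ≤ ‖g (φ t) - A‖ + ‖T • f₁ (φ t)‖ := hVAle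
      _ ≤ (L + ε₂) * (K * T) + T * Fc := by
          refine add_le_add ?_ ?_
          · calc ‖g (φ t) - A‖ ≤ (L + ε₂) * ‖φ t - θ₀‖ := hgbound _ hφt
              _ ≤ (L + ε₂) * (K * T) := by
                  refine mul_le_mul_of_nonneg_left hKt (by linarith)
          · rw [norm_smul, Real.norm_eq_abs, abs_of_pos hTpos]
            exact mul_le_mul_of_nonneg_left (hfbound _ hφt) hTpos.le
      _ ≤ ((L + 1) * K + Fc) * T := by
          have hx : (L + ε₂) * K ≤ (L + 1) * K := mul_le_mul_of_nonneg_right (by linarith) hK0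
          have hx2 : (L + ε₂) * (K * T) ≤ (L + 1) * K * T := by
            rw [← mul_assoc]
            exact mul_le_mul_of_nonneg_right hx hTpos.le
          linarith [hx2]
      _ = c4 * T := by rw [hc4]
  have hχ0 : χ 0 = 0 := by simp [hχ, hφ0]
  have hχmvt := norm_image_sub_le_of_norm_deriv_le_segment'
    (f := χ) (f' := fun t => V t + A) (a := 0) (b := T) (C := c4 * T)
    (fun z hz => (hχd z hz).hasDerivWithinAt) hχbound
  have hχbd : ∀ t ∈ Icc (0:ℝ) T, ‖χ t‖ ≤ c4 * T * t := by
    intro t ht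
    have := hχmvt t ht
    rw [hχ0] at this
    simpa using this
  -- second order: ψ
  set B := Hb A with hB
  set ψ : ℝ → X := fun t => χ t - (t^2/2) • B - (t*T) • f₁ θ₀ with hψ
  have hψd : ∀ t ∈ Icc (0:ℝ) T,
      HasDerivAt ψ (V t + A - t • B - T • f₁ θ₀) t := by
    intro t ht
    have hd2 : HasDerivAt (fun y : ℝ => (y^2/2) • B) (t • B) t := by
      have h1' : HasDerivAt (fun y : ℝ => y^2/2) t t := by
        have := (hasDerivAt_pow 2 t).div_const 2
        exact this.congr_deriv (by norm_num)
      simpa using h1'.smul_const B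
    have hd3 : HasDerivAt (fun y : ℝ => (y*T) • f₁ θ₀) (T • f₁ θ₀) t := by
      have h1' := ((hasDerivAt_id t).mul_const T).smul_const (f₁ θ₀)
      simpa using h1'
    exact ((hχd t ht).sub hd2).sub hd3
  have hψbound : ∀ t ∈ Ico (0:ℝ) T,
      ‖V t + A - t • B - T • f₁ θ₀‖ ≤ ε₂ * (K+1) * T + L * c4 * T^2 := by
    intro t ht
    have ht' : t ∈ Icc (0:ℝ) T := ⟨ht.1, ht.2.le⟩
    have hφt := hin t ht'
    have hrw : V t + A - t • B - T • f₁ θ₀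
        = -(g (φ t) - A - Hb (φ t - θ₀)) - Hb (χ t) + T • (f₁ (φ t) - f₁ θ₀) := by
      simp only [hV, hχ, hB, map_add, map_smul, smul_sub]
      abel
    have he1 : ‖g (φ t) - A - Hb (φ t - θ₀)‖ ≤ ε₂ * (K * T) := by
      calc ‖g (φ t) - A - Hb (φ t - θ₀)‖ ≤ ε₂ * ‖φ t - θ₀‖ := (hprop _ hφt).1
        _ ≤ ε₂ * (K * T) := by
            refine mul_le_mul_of_nonneg_left ?_ hε₂pos.le
            calc ‖φ t - θ₀‖ ≤ K * t := hstay t ht'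
              _ ≤ K * T := mul_le_mul_of_nonneg_left ht.2.le hK0
    have he2 : ‖Hb (χ t)‖ ≤ L * (c4 * T * T) := by
      calc ‖Hb (χ t)‖ ≤ L * ‖χ t‖ := Hb.le_opNorm _
        _ ≤ L * (c4 * T * T) := by
            refine mul_le_mul_of_nonneg_left ?_ hL0
            calc ‖χ t‖ ≤ c4 * T * t := hχbd t ht'
              _ ≤ c4 * T * T := by
                  exact mul_le_mul_of_nonneg_left ht.2.le (by positivity)
    have he3 : ‖T • (f₁ (φ t) - f₁ θ₀)‖ ≤ T * ε₂ := by
      rw [norm_smul, Real.norm_eq_abs, abs_of_pos hTpos]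
      exact mul_le_mul_of_nonneg_left (hprop _ hφt).2 hTpos.le
    calc ‖V t + A - t • B - T • f₁ θ₀‖
        ≤ ‖g (φ t) - A - Hb (φ t - θ₀)‖ + ‖Hb (χ t)‖ + ‖T • (f₁ (φ t) - f₁ θ₀)‖ := by
          rw [hrw]
          refine (norm_add_le _ _).trans ?_
          gcongr
          refine (norm_sub_le _ _).trans ?_
          rw [norm_neg]
      _ ≤ ε₂ * (K * T) + L * (c4 * T * T) + T * ε₂ := by
          exact add_le_add (add_le_add he1 he2) he3
      _ = ε₂ * (K+1) * T + L * c4 * T^2 := by ring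
  have hψ0 : ψ 0 = 0 := by simp [hψ, hχ, hφ0]
  have hψmvt := norm_image_sub_le_of_norm_deriv_le_segment'
    (f := ψ) (f' := fun t => V t + A - t • B - T • f₁ θ₀) (a := 0) (b := T)
    (C := ε₂ * (K+1) * T + L * c4 * T^2)
    (fun z hz => (hψd z hz).hasDerivWithinAt) hψbound
  have hfinal := hψmvt T (right_mem_Icc.mpr hTpos.le)
  rw [hψ0] at hfinal
  have hgoal_eq : φ T - (θ₀ + T • (-A) + (T^2/2) • B + T^2 • f₁ θ₀) = ψ T := by
    simp only [hψ, hχ, smul_neg, pow_two]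
    abel
  rw [hgoal_eq]
  have hT2 : T^2 = (n:ℝ)^2 * h^2 := by rw [hTdef]; ring
  have hsub : ψ T - 0 = ψ T := by simp
  rw [hsub] at hfinal
  calc ‖ψ T‖ ≤ (ε₂ * (K+1) * T + L * c4 * T^2) * (T - 0) := hfinal
    _ = ε₂ * (K+1) * T^2 + L * c4 * T^3 := by ring
    _ ≤ ε/2 * h^2 + ε/2 * h^2 := by
        refine add_le_add ?_ ?_
        · have : ε₂ * (K+1) * T^2 ≤ (ε / (2 * (n:ℝ)^2 * (K+1))) * (K+1) * ((n:ℝ)^2 * h^2) := by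
            rw [← hT2]
            refine mul_le_mul_of_nonneg_right (mul_le_mul_of_nonneg_right hε₂le (by linarith)) (by positivity)
          calc ε₂ * (K+1) * T^2 ≤ (ε / (2 * (n:ℝ)^2 * (K+1))) * (K+1) * ((n:ℝ)^2 * h^2) := this
            _ = ε/2 * h^2 := by field_simp
        · have hhh : h ≤ ε / (2 * L * c4 * (n:ℝ)^3 + 1) := le_trans hhlt.le (min_le_right _ _)
          have hden : (0:ℝ) < 2 * L * c4 * (n:ℝ)^3 + 1 := by positivity
          have h5 : L * c4 * (n:ℝ)^3 * h ≤ ε / 2 := by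
            have := mul_le_mul_of_nonneg_left hhh (by positivity : (0:ℝ) ≤ L * c4 * (n:ℝ)^3)
            calc L * c4 * (n:ℝ)^3 * h ≤ L * c4 * (n:ℝ)^3 * (ε / (2 * L * c4 * (n:ℝ)^3 + 1)) := this
              _ ≤ ε / 2 := by
                  rw [← mul_div_assoc, div_le_div_iff₀ hden (by norm_num : (0:ℝ) < 2)]
                  nlinarith [hε.le]
          calc L * c4 * T^3 = (L * c4 * (n:ℝ)^3 * h) * h^2 := by rw [hTdef]; ring
            _ ≤ ε/2 * h^2 := by nlinarith [sq_nonneg h]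
    _ = ε * h^2 := by ring

end AuxLemmas

set_option maxHeartbeats 1000000 in
/-- Backward error analysis uniquely determines the value at `θ₀` of the
first-order correction of a modified flow matching `n` SGD steps to order
`O(h³)`. -/
theorem bea_sgd_first_correction_unique {D n : ℕ} (hn : 1 ≤ n)
    (E : ℕ → EuclideanSpace ℝ (Fin D) → ℝ)
    (hE : ∀ μ < n, ContDiff ℝ (⊤ : ℕ∞) (E μ))
    (θ₀ : EuclideanSpace ℝ (Fin D))
    (f₁ : EuclideanSpace ℝ (Fin D) → EuclideanSpace ℝ (Fin D))
    (hf₁ : ContDiff ℝ 1 f₁)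
    (hyp : ∃ C > (0 : ℝ), ∃ h₀ > (0 : ℝ), ∀ h ∈ Set.Ioo (0 : ℝ) h₀,
      ∃ φ : ℝ → EuclideanSpace ℝ (Fin D),
        φ 0 = θ₀ ∧
        (∀ t ∈ Set.Icc (0 : ℝ) ((n : ℝ) * h),
          HasDerivAt φ (-(gradient (avgLoss n E) (φ t)) + ((n : ℝ) * h) • f₁ (φ t)) t) ∧
        ‖φ ((n : ℝ) * h) - sgdIter E h θ₀ n‖ ≤ C * h ^ 3) :
    f₁ θ₀ = -((1 / 2 : ℝ) •
        fderiv ℝ (gradient (avgLoss n E)) θ₀ (gradient (avgLoss n E) θ₀))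
      + (1 / (n : ℝ) ^ 2) • ∑ μ ∈ Finset.range n, ∑ τ ∈ Finset.range μ,
          fderiv ℝ (gradient (E μ)) θ₀ (gradient (E τ) θ₀) := by
  obtain ⟨C, hC, h₀, hh₀, hyp⟩ := hyp
  have hnR : (0:ℝ) < n := by exact_mod_cast Nat.pos_of_ne_zero (by omega)
  have hn2 : ((n:ℝ)^2) ≠ 0 := by positivity
  set A := gradient (avgLoss n E) θ₀ with hA
  set Hb := fderiv ℝ (gradient (avgLoss n E)) θ₀ with hHb
  set S₁ := ∑ μ ∈ Finset.range n, gradient (E μ) θ₀ with hS₁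
  set S₂ := ∑ μ ∈ Finset.range n, ∑ τ ∈ Finset.range μ,
      fderiv ℝ (gradient (E μ)) θ₀ (gradient (E τ) θ₀) with hS₂
  have havg : ContDiff ℝ (⊤ : ℕ∞) (avgLoss n E) := avgLoss_contDiff hE
  have hgradC : ContDiff ℝ (⊤ : ℕ∞) (gradient (avgLoss n E)) := contDiff_gradient havg
  have hgfd : HasFDerivAt (gradient (avgLoss n E)) Hb θ₀ :=
    ((hgradC.differentiable (by simp)) θ₀).hasFDerivAt
  have hnA : (n:ℝ) • A = S₁ := n_smul_gradient_avgLoss hE hn θ₀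
  have hsgd := sgd_expand E θ₀ n
    (fun μ hμ => ((contDiff_gradient (hE μ hμ)).differentiable (by simp)) θ₀)
  set v := (n:ℝ)^2 • f₁ θ₀ + ((n:ℝ)^2/2) • Hb A - S₂ with hv
  have hv0 : v = 0 := by
    have key : ∀ ε > (0:ℝ), ‖v‖ ≤ ε := by
      intro ε hε
      obtain ⟨h₁, hh₁, hflow⟩ :=
        flow_taylor hgfd (hf₁.continuous.continuousAt) n hn (ε/3) (by linarith)
      have hs := isLittleO_iff.mp hsgd (show (0:ℝ) < ε/3 by linarith)
      obtain ⟨h₂, hh₂, hsgd'⟩ := Metric.eventually_nhds_iff.mp hs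
      set h := min (min h₀ h₁) (min h₂ (ε/(3*C))) / 2 with hh_def
      have hhpos : 0 < h := by
        apply div_pos _ (by norm_num)
        apply lt_min (lt_min hh₀ hh₁) (lt_min hh₂ (by positivity))
      have hlt1 : h < h₀ := by
        have : min (min h₀ h₁) (min h₂ (ε/(3*C))) ≤ h₀ := le_trans (min_le_left _ _) (min_le_left _ _)
        rw [hh_def]; linarith
      have hlt2 : h < h₁ := by
        have : min (min h₀ h₁) (min h₂ (ε/(3*C))) ≤ h₁ := le_trans (min_le_left _ _) (min_le_right _ _)
        rw [hh_def]; linarith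
      have hlt3 : h < h₂ := by
        have : min (min h₀ h₁) (min h₂ (ε/(3*C))) ≤ h₂ := le_trans (min_le_right _ _) (min_le_left _ _)
        rw [hh_def]; linarith
      have hlt4 : h ≤ ε/(3*C) := by
        have : min (min h₀ h₁) (min h₂ (ε/(3*C))) ≤ ε/(3*C) := le_trans (min_le_right _ _) (min_le_right _ _)
        rw [hh_def]; linarith
      obtain ⟨φ, hφ0, hφd, hφclose⟩ := hyp h ⟨hhpos, hlt1⟩
      have hfl := hflow h ⟨hhpos, hlt2⟩ φ hφ0 hφd
      have hsg : ‖sgdIter E h θ₀ n - θ₀ + h • S₁ - h^2 • S₂‖ ≤ ε/3 * ‖h^2‖ := by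
        refine hsgd' ?_
        rw [Real.dist_eq, sub_zero, abs_of_pos hhpos]
        exact hlt3
      have hid : (h:ℝ)^2 • v =
          ((θ₀ + ((n:ℝ)*h) • (-A) + (((n:ℝ)*h)^2/2) • Hb A + ((n:ℝ)*h)^2 • f₁ θ₀)
            - φ ((n:ℝ)*h))
          + (φ ((n:ℝ)*h) - sgdIter E h θ₀ n)
          + (sgdIter E h θ₀ n - θ₀ + h • S₁ - h^2 • S₂) := by
        rw [hv, ← hnA]
        module
      have hnorm : ‖(h:ℝ)^2 • v‖ ≤ ε/3 * h^2 + C * h^3 + ε/3 * h^2 := by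
        rw [hid]
        refine (norm_add₃_le).trans ?_
        refine add_le_add (add_le_add ?_ hφclose) ?_
        · rw [norm_sub_rev]
          exact hfl
        · have : ‖h^2‖ = h^2 := by
            rw [Real.norm_eq_abs, abs_of_pos (by positivity)]
          rw [this] at hsg
          exact hsg
      have hCh : C * h^3 ≤ ε/3 * h^2 := by
        have h1' : C * h ≤ ε/3 := by
          calc C * h ≤ C * (ε/(3*C)) := mul_le_mul_of_nonneg_left hlt4 hC.le
            _ = ε/3 := by field_simp
        calc C * h^3 = (C * h) * h^2 := by ring
          _ ≤ ε/3 * h^2 := mul_le_mul_of_nonneg_right h1' (by positivity)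
      have hfin : ‖v‖ * h^2 ≤ ε * h^2 := by
        have : ‖(h:ℝ)^2 • v‖ = ‖v‖ * h^2 := by
          rw [norm_smul, Real.norm_eq_abs, abs_of_pos (by positivity : (0:ℝ) < h^2)]
          ring
        rw [this] at hnorm
        linarith
      exact le_of_mul_le_mul_right (by linarith [hfin]) (by positivity : (0:ℝ) < h^2)
    have hvnorm : ‖v‖ ≤ 0 := by
      refine le_of_forall_pos_le_add ?_
      intro ε hε
      simpa using key ε hε
    exact norm_le_zero_iff.mp hvnorm
  -- final algebra
  have h2 : (n:ℝ)^2 • f₁ θ₀ = S₂ - ((n:ℝ)^2/2) • Hb A := by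
    have h3 : (n:ℝ)^2 • f₁ θ₀ + ((n:ℝ)^2/2) • Hb A = S₂ := by
      have := sub_eq_zero.mp hv0
      exact this
    exact eq_sub_of_add_eq h3
  have hgoal : (n:ℝ)^2 • f₁ θ₀ =
      (n:ℝ)^2 • (-((1/2:ℝ) • Hb A) + (1/(n:ℝ)^2) • S₂) := by
    rw [h2]
    match_scalars
    · field_simp
    · field_simp
  have := smul_right_injective (EuclideanSpace ℝ (Fin D)) hn2 hgoal
  exact this
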